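/- Let P be a prime graph and k a positive integer. Then the automorphism group of the k-fold box product P^{□k} = P □ P □ ⋯ □ P (k factors) is isomorphic, as a group, to the wreath product Aut(P) ≀ S_k, i.e., to the semidirect product (Fin k → Aut(P)) ⋊ S_k where the symmetric group S_k = Perm(Fin k) acts on the k-fold direct power of Aut(P) by permuting coordinates. -/

import Mathlib

open SimpleGraph

/-- The box (Cartesian) product of a finite family of simple graphs. -/
def boxProdFamily {k : ℕ} {W : Fin k → Type} (P : ∀ i, SimpleGraph (W i)) :
    SimpleGraph (∀ i, W i) where
  Adj u v := ∃ j, (P j).Adj (u j) (v j) ∧ ∀ i, i ≠ j → u i = v i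
  symm := ⟨fun _ _ ⟨j, hadj, h⟩ => ⟨j, hadj.symm, fun i hi => (h i hi).symm⟩⟩
  loopless := ⟨fun _ ⟨j, hadj, _⟩ => (P j).loopless.irrefl _ hadj⟩

/-- The `k`-fold box product `P □ P □ ⋯ □ P` of a simple graph `P`. -/
def boxProdPow {V : Type} (P : SimpleGraph V) (k : ℕ) : SimpleGraph (Fin k → V) :=
  boxProdFamily fun _ : Fin k => P

/-- A finite simple graph is prime with respect to the box product. -/
def SimpleGraph.IsPrime {V : Type} [Fintype V] (G : SimpleGraph V) : Prop :=
  G.Connected ∧ 2 ≤ Fintype.card V ∧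
    ∀ (V₁ V₂ : Type) [Fintype V₁] [Fintype V₂]
      (H₁ : SimpleGraph V₁) (H₂ : SimpleGraph V₂),
      Nonempty (G ≃g H₁.boxProd H₂) →
      Fintype.card V₁ = 1 ∨ Fintype.card V₂ = 1

/-- The group of automorphisms of a simple graph, under composition. -/
instance SimpleGraph.autGroup {V : Type*} (G : SimpleGraph V) : Group (G ≃g G) where
  mul f g := g.trans f
  one := Iso.refl
  inv := Iso.symm
  mul_assoc _ _ _ := rfl
  one_mul f := RelIso.ext fun _ => rfl
  mul_one f := RelIso.ext fun _ => rfl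
  inv_mul_cancel f := RelIso.ext fun x => f.toEquiv.symm_apply_apply x

/-- The action of the symmetric group `Perm (Fin k)` on the `k`-fold direct power
of a group `G`, permuting the coordinates. -/
def permCoordAction (k : ℕ) (G : Type*) [Group G] :
    Equiv.Perm (Fin k) →* MulAut (Fin k → G) where
  toFun σ :=
    { toFun := fun f => f ∘ σ.symm
      invFun := fun f => f ∘ σ
      left_inv := fun f => by ext i; simp
      right_inv := fun f => by ext i; simp
      map_mul' := fun f g => rfl }
  map_one' := by ext f i; rfl
  map_mul' := fun σ₁ σ₂ => by ext f i; rfl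

/-! Distances in `P^{□k}` are sums of coordinate distances, so every flat (a subproduct through a
point) is convex, and so is its image under an automorphism `φ`. A convex set is closed under
exchanging coordinates between its points, hence is the box of its coordinate projections. The
image of a `P`-layer is such a box and is isomorphic to `P`, so primality of `P` forces it to be a
layer again. Counting vertices in the image of a two-dimensional flat shows that the direction of
the image layer depends only on the direction of the original one. This yields a permutation `σ`
and automorphisms `g j` of `P` with `φ x (σ j) = g j (x j)`, i.e. `φ` comes from the wreath
product, and the evident map from the wreath product is injective because `P` has two vertices. -/

open Function Set

lemma exists_eq_and_eq_one_of_prod_eq {ι : Type*} [Fintype ι] {f : ι → ℕ} {n : ℕ} (hn : 2 ≤ n)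
    (hf : ∀ i, f i = 1 ∨ f i = n) (hprod : ∏ i, f i = n) : ∃ m, f m = n ∧ ∀ i ≠ m, f i = 1 := by
  classical
  have hpow : n ^ (Finset.univ.filter fun i => f i = n).card = n ^ 1 := by
    calc n ^ (Finset.univ.filter fun i => f i = n).card = ∏ i, if f i = n then n else 1 := by
          rw [Finset.prod_ite, Finset.prod_const, Finset.prod_const_one, mul_one]
      _ = ∏ i, f i := Finset.prod_congr rfl fun i _ => by split_ifs <;> grind
      _ = n ^ 1 := by rw [hprod, pow_one]
  obtain ⟨m, hm⟩ := Finset.card_eq_one.mp (Nat.pow_right_injective hn hpow)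
  have hmem : ∀ i, f i = n ↔ i = m := fun i => by
    simpa using congrArg (i ∈ ·) hm
  exact ⟨m, (hmem m).mpr rfl, fun i hi => (hf i).resolve_right (mt (hmem i).mp hi)⟩

lemma pow_card_le_prod {ι : Type*} [Fintype ι] {f : ι → ℕ} {n : ℕ} {A : Finset ι}
    (hf : ∀ i, 1 ≤ f i) (hA : ∀ i ∈ A, f i = n) : n ^ A.card ≤ ∏ i, f i := by
  calc n ^ A.card = ∏ i ∈ A, f i := by rw [Finset.prod_congr rfl hA, Finset.prod_const]
    _ ≤ ∏ i, f i :=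
      Finset.prod_le_prod_of_subset_of_one_le' (Finset.subset_univ A) fun i _ _ => hf i

section Pi

variable {ι : Type*} {β : ι → Type*}

lemma apply_eq_of_forall_update_eq [DecidableEq ι] [Fintype ι] {γ : Type*}
    {f : (∀ i, β i) → γ} {T : Set ι} (hf : ∀ x i v, i ∉ T → f (update x i v) = f x) {x y : ∀ i, β i}
    (hxy : ∀ i ∈ T, x i = y i) : f x = f y := by
  suffices h : ∀ s : Finset ι, f (s.piecewise y x) = f x by
    simpa using (h Finset.univ).symm
  intro s
  induction s using Finset.induction_on with
  | empty => rw [Finset.piecewise_empty]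
  | insert j s hj ih =>
    rw [Finset.piecewise_insert, ← ih]
    by_cases hjT : j ∈ T
    · rw [← hxy j hjT, ← Finset.piecewise_eq_of_notMem s y x hj, update_eq_self]
    · exact hf _ j _ hjT

lemma eq_of_forall_apply_eq {V : Type*} [Nontrivial V] {i j : ι} (h : ∀ x : ι → V, x i = x j) :
    i = j := by
  classical
  by_contra hij
  obtain ⟨v, w, hvw⟩ := exists_pair_ne V
  have hx := h (update (fun _ => v) i w)
  rw [update_self, update_of_ne (Ne.symm hij)] at hx
  exact hvw hx.symm

lemma univ_pi_eval_image_eq [DecidableEq ι] [Finite ι] {C : Set (∀ i, β i)} (hC : C.Nonempty)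
    (hpw : ∀ x ∈ C, ∀ y ∈ C, ∀ s : Finset ι, s.piecewise x y ∈ C) :
    univ.pi (fun i => eval i '' C) = C := by
  refine (Subset.antisymm ?_ (subset_pi_eval_image univ C))
  intro z hz
  have hfin : ∀ s : Finset ι, ∃ c ∈ C, ∀ i ∈ s, c i = z i := by
    intro s
    induction s using Finset.induction_on with
    | empty => exact ⟨hC.some, hC.some_mem, by simp⟩
    | insert j s _ ih =>
      obtain ⟨c, hc, hcs⟩ := ih
      obtain ⟨d, hd, hdj⟩ := hz j (mem_univ j)
      refine ⟨({j} : Finset ι).piecewise d c, hpw d hd c hc {j}, fun i hi => ?_⟩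
      rw [Finset.piecewise_singleton]
      rcases eq_or_ne i j with rfl | hij
      · simpa using hdj
      · rw [update_of_ne hij]
        exact hcs i ((Finset.mem_insert.mp hi).resolve_left hij)
  have := Fintype.ofFinite ι
  obtain ⟨c, hc, hcz⟩ := hfin Finset.univ
  rwa [← funext fun i => hcz i (Finset.mem_univ i)]

lemma Set.ncard_univ_pi [Fintype ι] (S : ∀ i, Set (β i)) :
    (univ.pi S).ncard = ∏ i, (S i).ncard := by
  rw [← Nat.card_coe_set_eq, Nat.card_congr (Equiv.Set.univPi S), Nat.card_pi]
  rfl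

end Pi

namespace SimpleGraph

variable {V V' : Type*} {G : SimpleGraph V} {G' : SimpleGraph V'}

lemma Hom.dist_map_le (f : G →g G') {u v : V} (h : G.Reachable u v) :
    G'.dist (f u) (f v) ≤ G.dist u v := by
  obtain ⟨w, hw⟩ := h.exists_walk_length_eq_dist
  exact hw ▸ (w.length_map f) ▸ dist_le (w.map f)

lemma Iso.dist_eq (f : G ≃g G') (u v : V) : G'.dist (f u) (f v) = G.dist u v := by
  by_cases h : G.Reachable u v
  · refine le_antisymm (f.toHom.dist_map_le h) ?_
    simpa using f.symm.toHom.dist_map_le (h.map f.toHom)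
  · have h' : ¬G'.Reachable (f u) (f v) := fun h' => h (by simpa using h'.map f.symm.toHom)
    rw [dist_eq_zero_of_not_reachable h, dist_eq_zero_of_not_reachable h']

def IsConvex (G : SimpleGraph V) (C : Set V) : Prop :=
  ∀ ⦃x⦄, x ∈ C → ∀ ⦃y⦄, y ∈ C → ∀ z, G.dist x z + G.dist z y = G.dist x y → z ∈ C

lemma IsConvex.image_iso {C : Set V} (hC : G.IsConvex C) (f : G ≃g G') :
    G'.IsConvex (f '' C) := by
  rintro _ ⟨x, hx, rfl⟩ _ ⟨y, hy, rfl⟩ z hz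
  refine ⟨f.symm z, hC hx hy _ ?_, by simp⟩
  simpa only [← f.dist_eq x, ← f.dist_eq (f.symm z), ← f.dist_eq x y, RelIso.apply_symm_apply]
    using hz

end SimpleGraph

def flat {ι : Type*} {β : ι → Type*} (T : Set ι) (a : ∀ i, β i) : Set (∀ i, β i) :=
  {x | ∀ i ∉ T, x i = a i}

section BoxProdFamily

variable {k : ℕ} {W : Fin k → Type} {P : ∀ i, SimpleGraph (W i)}

lemma boxProdFamily_adj {x y : ∀ i, W i} :
    (boxProdFamily P).Adj x y ↔ ∃ j, (P j).Adj (x j) (y j) ∧ ∀ i, i ≠ j → x i = y i :=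
  Iff.rfl

lemma boxProdFamily_adj_update_iff {x : ∀ i, W i} {j : Fin k} {v w : W j} :
    (boxProdFamily P).Adj (update x j v) (update x j w) ↔ (P j).Adj v w := by
  refine ⟨fun ⟨i, hadj, _⟩ => ?_, fun h => ⟨j, by simpa using h, fun i hi => by simp [hi]⟩⟩
  rcases eq_or_ne i j with rfl | hij
  · simpa using hadj
  · simp [update_of_ne hij] at hadj

def boxProdFamilyLayer (x : ∀ i, W i) (j : Fin k) : P j ↪g boxProdFamily P where
  toFun := update x j
  inj' := update_injective x j
  map_rel_iff' := boxProdFamily_adj_update_iff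

@[simp]
lemma boxProdFamilyLayer_apply (x : ∀ i, W i) (j : Fin k) (v : W j) :
    boxProdFamilyLayer (P := P) x j v = update x j v :=
  rfl

lemma boxProdFamily_connected (hP : ∀ i, (P i).Connected) : (boxProdFamily P).Connected := by
  have : Nonempty (∀ i, W i) := ⟨fun i => (hP i).nonempty.some⟩
  refine ⟨fun x y => ?_⟩
  have hstep : ∀ z j v, (boxProdFamily P).Reachable z (update z j v) := fun z j v => by
    simpa using ((hP j).preconnected (z j) v).map (boxProdFamilyLayer z j).toHom
  have hupdate : ∀ z j v, (boxProdFamily P).Reachable x (update z j v) =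
      (boxProdFamily P).Reachable x z := fun z j v =>
    propext ⟨fun h => h.trans (hstep z j v).symm, fun h => h.trans (hstep z j v)⟩
  have := apply_eq_of_forall_update_eq (T := ∅) (fun z j v _ => hupdate z j v)
    (x := y) (y := x) (by simp)
  exact this ▸ Reachable.refl x

lemma boxProdFamily_dist_le_sum (hP : ∀ i, (P i).Connected) (x y : ∀ i, W i) :
    (boxProdFamily P).dist x y ≤ ∑ i, (P i).dist (x i) (y i) := by
  suffices h : ∀ s : Finset (Fin k),
      (boxProdFamily P).dist x (s.piecewise y x) ≤ ∑ i ∈ s, (P i).dist (x i) (y i) by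
    simpa using h Finset.univ
  intro s
  induction s using Finset.induction_on with
  | empty => simp
  | insert j s hj ih =>
    rw [Finset.piecewise_insert, Finset.sum_insert hj]
    set z := s.piecewise y x
    have hzj : z j = x j := Finset.piecewise_eq_of_notMem s y x hj
    calc (boxProdFamily P).dist x (update z j (y j))
        ≤ (boxProdFamily P).dist x z + (boxProdFamily P).dist z (update z j (y j)) :=
          (boxProdFamily_connected hP).dist_triangle
      _ ≤ ∑ i ∈ s, (P i).dist (x i) (y i) + (P j).dist (x j) (y j) := by
          gcongr
          have h := (boxProdFamilyLayer z j).toHom.dist_map_le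
            ((hP j).preconnected (z j) (y j))
          simp only [RelEmbedding.coe_toRelHom, boxProdFamilyLayer_apply, update_eq_self] at h
          rwa [hzj] at h
      _ = _ := add_comm _ _

lemma boxProdFamily_sum_dist_eq_one_of_adj {x y : ∀ i, W i} (h : (boxProdFamily P).Adj x y) :
    ∑ i, (P i).dist (x i) (y i) = 1 := by
  obtain ⟨j, hadj, heq⟩ := h
  rw [Finset.sum_eq_single j (fun i _ hi => by rw [heq i hi, dist_self]) (by simp)]
  exact dist_eq_one_iff_adj.mpr hadj

lemma boxProdFamily_sum_dist_le_length {x y : ∀ i, W i} (hP : ∀ i, (P i).Connected)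
    (w : (boxProdFamily P).Walk x y) : ∑ i, (P i).dist (x i) (y i) ≤ w.length := by
  induction w with
  | nil => simp
  | @cons x y z h w ih =>
    calc ∑ i, (P i).dist (x i) (z i)
        ≤ ∑ i, ((P i).dist (x i) (y i) + (P i).dist (y i) (z i)) :=
          Finset.sum_le_sum fun i _ => (hP i).dist_triangle
      _ ≤ 1 + w.length := by
          rw [Finset.sum_add_distrib, boxProdFamily_sum_dist_eq_one_of_adj h]
          exact Nat.add_le_add_left ih 1
      _ = (Walk.cons h w).length := by rw [Walk.length_cons, add_comm]

lemma boxProdFamily_dist (hP : ∀ i, (P i).Connected) (x y : ∀ i, W i) :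
    (boxProdFamily P).dist x y = ∑ i, (P i).dist (x i) (y i) := by
  refine le_antisymm (boxProdFamily_dist_le_sum hP x y) ?_
  obtain ⟨w, hw⟩ := (boxProdFamily_connected hP).exists_walk_length_eq_dist x y
  exact hw ▸ boxProdFamily_sum_dist_le_length hP w

lemma boxProdFamily_isConvex_flat (hP : ∀ i, (P i).Connected) (T : Set (Fin k))
    (a : ∀ i, W i) :
    (boxProdFamily P).IsConvex (flat T a) := by
  intro x hx y hy z hz i hi
  simp only [boxProdFamily_dist hP, ← Finset.sum_add_distrib] at hz
  have hsplit := (Finset.sum_eq_sum_iff_of_le fun i _ => (hP i).dist_triangle).mp hz.symm i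
    (Finset.mem_univ i)
  rw [hx i hi, hy i hi, dist_self] at hsplit
  exact ((hP i).dist_eq_zero_iff.mp (by omega : (P i).dist (a i) (z i) = 0)).symm

lemma SimpleGraph.IsConvex.piecewise_mem (hP : ∀ i, (P i).Connected) {C : Set (∀ i, W i)}
    (hC : (boxProdFamily P).IsConvex C) {x y : ∀ i, W i} (hx : x ∈ C) (hy : y ∈ C)
    (s : Finset (Fin k)) : s.piecewise x y ∈ C := by
  refine hC hx hy _ ?_
  simp only [boxProdFamily_dist hP, ← Finset.sum_add_distrib]
  refine Finset.sum_congr rfl fun i _ => ?_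
  by_cases hi : i ∈ s <;> simp [hi]

lemma boxProdFamily_adj_iff_update (i : Fin k) (w : W i) {x y : ∀ i, W i} :
    (boxProdFamily P).Adj x y ↔
      (P i).Adj (x i) (y i) ∧ update x i w = update y i w ∨
        (boxProdFamily P).Adj (update x i w) (update y i w) ∧ x i = y i := by
  constructor
  · rintro ⟨j, hadj, heq⟩
    rcases eq_or_ne j i with rfl | hji
    · refine Or.inl ⟨hadj, funext fun l => ?_⟩
      rcases eq_or_ne l j with rfl | hlj
      · simp
      · simp [hlj, heq l hlj]
    · refine Or.inr ⟨⟨j, by simpa [hji] using hadj, fun l hl => ?_⟩, heq i hji.symm⟩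
      rcases eq_or_ne l i with rfl | hli
      · simp
      · simp [hli, heq l hl]
  · rintro (⟨hadj, heq⟩ | ⟨⟨j, hadj, heq⟩, hxy⟩)
    · exact ⟨i, hadj, fun l hl => by simpa [hl] using congrFun heq l⟩
    · have hji : j ≠ i := by
        rintro rfl
        simp at hadj
      refine ⟨j, by simpa [hji] using hadj, fun l hl => ?_⟩
      rcases eq_or_ne l i with rfl | hli
      · exact hxy
      · simpa [hli] using heq l hl

def boxProdFamilyInduceSplit {C : Set (∀ i, W i)} (i : Fin k)
    (hC : ∀ x ∈ C, ∀ y ∈ C, update x i (y i) ∈ C) {c : ∀ i, W i} (hc : c ∈ C) :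
    (boxProdFamily P).induce C ≃g
      ((P i).induce (eval i '' C)).boxProd
        ((boxProdFamily P).induce {x | x ∈ C ∧ x i = c i}) where
  toFun x := (⟨x.1 i, mem_image_of_mem _ x.2⟩, ⟨update x.1 i (c i), hC _ x.2 c hc, by simp⟩)
  invFun p := ⟨update p.2.1 i p.1.1, by
    obtain ⟨d, hd, hdi⟩ := p.1.2
    exact hdi ▸ hC _ p.2.2.1 d hd⟩
  left_inv x := Subtype.ext (by simp)
  right_inv p := Prod.ext (Subtype.ext (by simp)) (Subtype.ext (by
    conv_rhs => rw [← update_eq_self i p.2.1, p.2.2.2]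
    simp))
  map_rel_iff' {x y} := by
    simp [boxProdFamily_adj_iff_update i (c i) (x := x.1), Subtype.ext_iff]

end BoxProdFamily

section Flat

variable {ι V : Type*}

lemma ncard_flat [Finite ι] (T : Set ι) (a : ι → V) :
    (flat T a).ncard = Nat.card V ^ T.ncard := by
  classical
  rw [← Nat.card_coe_set_eq, ← Nat.card_coe_set_eq T, ← Nat.card_fun]
  exact Nat.card_congr
    { toFun x t := x.1 t
      invFun f := ⟨fun i => if h : i ∈ T then f ⟨i, h⟩ else a i, fun i hi => by simp [hi]⟩
      left_inv x := Subtype.ext (funext fun i => by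
        by_cases hi : i ∈ T
        · simp [hi]
        · simp [hi, x.2 i hi])
      right_inv f := funext fun t => by simp }

lemma univ_pi_eq_flat_singleton {S : ι → Set V} {m : ι} {p : ι → V} (hm : S m = univ)
    (hS : ∀ i ≠ m, S i = {p i}) : univ.pi S = flat {m} p := by
  ext x
  refine ⟨fun hx i hi => by simpa [hS i hi] using hx i (mem_univ i), fun hx i _ => ?_⟩
  rcases eq_or_ne i m with rfl | him
  · simp [hm]
  · simp [hS i him, hx i him]

lemma flat_eq_of_mem {T : Set ι} {a b : ι → V} (hb : b ∈ flat T a) : flat T b = flat T a := by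
  ext x
  exact forall₂_congr fun i hi => by rw [hb i hi]

lemma flat_mono {T T' : Set ι} (h : T ⊆ T') (a : ι → V) : flat T a ⊆ flat T' a :=
  fun _ hx i hi => hx i (fun hiT => hi (h hiT))

variable [DecidableEq ι]

lemma flat_singleton_eq_range (j : ι) (a : ι → V) : flat {j} a = range (update a j) := by
  ext x
  refine ⟨fun hx => ⟨x j, funext fun i => ?_⟩, ?_⟩
  · rcases eq_or_ne i j with rfl | hij
    · simp
    · simp [hij, hx i hij]
  · rintro ⟨v, rfl⟩ i hi
    simp [show i ≠ j from hi]

lemma update_mem_flat_singleton (j : ι) (a : ι → V) (v : V) : update a j v ∈ flat {j} a := by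
  rw [flat_singleton_eq_range]
  exact mem_range_self v

lemma eq_of_flat_singleton_eq [Nontrivial V] {m m' : ι} {p p' : ι → V}
    (h : flat {m} p = flat {m'} p') : m = m' := by
  by_contra hne
  obtain ⟨v, hv⟩ := exists_ne (p' m)
  have hmem := h ▸ update_mem_flat_singleton m p v
  exact hv (by simpa using hmem m hne)

lemma eq_univ_of_flat_singleton_subset_univ_pi {S : ι → Set V} {m : ι} {p : ι → V}
    (h : flat {m} p ⊆ univ.pi S) : S m = univ :=
  eq_univ_of_forall fun v => by
    simpa using h (update_mem_flat_singleton m p v) m (mem_univ m)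

end Flat

lemma SimpleGraph.IsPrime.card_eq_one_or {V : Type} [Fintype V] {P : SimpleGraph V}
    (hP : P.IsPrime) {V₁ V₂ : Type} [Finite V₁] [Finite V₂] {H₁ : SimpleGraph V₁}
    {H₂ : SimpleGraph V₂} (e : P ≃g H₁.boxProd H₂) : Nat.card V₁ = 1 ∨ Nat.card V₂ = 1 := by
  have := Fintype.ofFinite V₁
  have := Fintype.ofFinite V₂
  simpa only [Nat.card_eq_fintype_card] using hP.2.2 V₁ V₂ H₁ H₂ ⟨e⟩

lemma SimpleGraph.IsPrime.two_le_card {V : Type} [Fintype V] {P : SimpleGraph V}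
    (hP : P.IsPrime) : 2 ≤ Nat.card V :=
  Nat.card_eq_fintype_card (α := V) ▸ hP.2.1

lemma SimpleGraph.IsPrime.nontrivial {V : Type} [Fintype V] {P : SimpleGraph V}
    (hP : P.IsPrime) : Nontrivial V :=
  Fintype.one_lt_card_iff_nontrivial.mp hP.2.1

section Automorphism

variable {V : Type} {P : SimpleGraph V} {k : ℕ}

lemma isConvex_image_flat (hP : P.Connected) (φ : boxProdPow P k ≃g boxProdPow P k)
    (T : Set (Fin k)) (a : Fin k → V) : (boxProdPow P k).IsConvex (φ '' flat T a) :=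
  (boxProdFamily_isConvex_flat (fun _ => hP) T a).image_iso φ

lemma univ_pi_eval_image_image_flat (hP : P.Connected) (φ : boxProdPow P k ≃g boxProdPow P k)
    (T : Set (Fin k)) (a : Fin k → V) :
    univ.pi (fun i => eval i '' (φ '' flat T a)) = φ '' flat T a :=
  univ_pi_eval_image_eq ⟨φ a, a, fun _ _ => rfl, rfl⟩ fun _ hx _ hy =>
    (isConvex_image_flat hP φ T a).piecewise_mem (fun _ => hP) hx hy

lemma ncard_image_flat [Finite V] (φ : boxProdPow P k ≃g boxProdPow P k) (T : Set (Fin k))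
    (a : Fin k → V) : (φ '' flat T a).ncard = Nat.card V ^ T.ncard := by
  rw [ncard_image_of_injective _ φ.injective, ncard_flat]

variable [Fintype V]

/-- The image of the layer is isomorphic to `P` and splits as its `i`-th projection times a fibre;
by primality one of the two is a single vertex. -/
lemma ncard_eval_image_image_flat_singleton (hP : P.IsPrime)
    (φ : boxProdPow P k ≃g boxProdPow P k) (j : Fin k) (a : Fin k → V) (i : Fin k) :
    (eval i '' (φ '' flat {j} a)).ncard = 1 ∨
      (eval i '' (φ '' flat {j} a)).ncard = Nat.card V := by
  set C := φ '' flat {j} a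
  have hupdate : ∀ x ∈ C, ∀ y ∈ C, update x i (y i) ∈ C := fun x hx y hy => by
    simpa only [Finset.piecewise_singleton] using
      (isConvex_image_flat hP.1 φ {j} a).piecewise_mem (fun _ => hP.1) hy hx {i}
  have hφa : φ a ∈ C := ⟨a, fun _ _ => rfl, rfl⟩
  have hline : BijOn φ (range (update a j)) C := by
    rw [← flat_singleton_eq_range]
    exact φ.injective.injOn.bijOn_image
  let split := boxProdFamilyInduceSplit (P := fun _ => P) i hupdate hφa
  have hsplit : C.ncard = (eval i '' C).ncard * {x | x ∈ C ∧ x i = φ a i}.ncard :=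
    (Nat.card_congr split.toEquiv).trans (Nat.card_prod _ _)
  rcases hP.card_eq_one_or
    (((boxProdFamilyLayer a j).isoInduceRange.trans (φ.induce hline)).trans split) with h | h
  · exact Or.inl h
  · rw [Nat.card_coe_set_eq] at h
    rw [h, mul_one] at hsplit
    exact Or.inr (by simpa [C, ncard_image_flat] using hsplit.symm)

lemma exists_image_flat_singleton_eq (hP : P.IsPrime) (φ : boxProdPow P k ≃g boxProdPow P k)
    (j : Fin k) (a : Fin k → V) : ∃ m, φ '' flat {j} a = flat {m} (φ a) := by
  set C := φ '' flat {j} a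
  have hbox : univ.pi (fun i => eval i '' C) = C := univ_pi_eval_image_image_flat hP.1 φ {j} a
  have hprod : ∏ i, (eval i '' C).ncard = Nat.card V := by
    rw [← ncard_univ_pi, hbox]
    simp [C, ncard_image_flat]
  obtain ⟨m, hm, hother⟩ := exists_eq_and_eq_one_of_prod_eq hP.two_le_card
    (ncard_eval_image_image_flat_singleton hP φ j a) hprod
  refine ⟨m, hbox ▸ univ_pi_eq_flat_singleton ((eq_univ_iff_ncard _).mpr hm) fun i hi => ?_⟩
  obtain ⟨v, hv⟩ := ncard_eq_one.mp (hother i hi)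
  rw [hv, eq_comm, singleton_eq_singleton_iff, ← mem_singleton_iff, ← hv]
  exact mem_image_of_mem _ ⟨a, fun _ _ => rfl, rfl⟩

end Automorphism

namespace boxProdPow

variable {V : Type} [Fintype V] {P : SimpleGraph V} {k : ℕ} (hP : P.IsPrime)
  (φ : boxProdPow P k ≃g boxProdPow P k)

noncomputable def layerDir (j : Fin k) (a : Fin k → V) : Fin k :=
  (exists_image_flat_singleton_eq hP φ j a).choose

lemma image_flat_singleton (j : Fin k) (a : Fin k → V) :
    φ '' flat {j} a = flat {layerDir hP φ j a} (φ a) :=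
  (exists_image_flat_singleton_eq hP φ j a).choose_spec

lemma layerDir_injective (a : Fin k → V) : Injective fun j => layerDir hP φ j a := by
  have := hP.nontrivial
  intro j j' h
  have himage := (image_flat_singleton hP φ j a).trans
    ((congrArg (flat {·} (φ a)) h).trans (image_flat_singleton hP φ j' a).symm)
  exact eq_of_flat_singleton_eq (image_injective.mpr φ.injective himage)

lemma layerDir_of_mem_flat_singleton {j : Fin k} {a b : Fin k → V} (hb : b ∈ flat {j} a) :
    layerDir hP φ j b = layerDir hP φ j a := by
  have := hP.nontrivial
  refine eq_of_flat_singleton_eq (p := φ b) (p' := φ a) ?_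
  rw [← image_flat_singleton, ← image_flat_singleton, flat_eq_of_mem hb]

/-- The image of the `{i, j}`-flat through `a` is a box with `|V|²` vertices. Otherwise it would
contain layers in the three distinct directions `layerDir i a`, `layerDir j a`, `layerDir j b`
and so have at least `|V|³` vertices. -/
lemma layerDir_of_mem_flat_singleton_of_ne {i j : Fin k} (hij : i ≠ j) {a b : Fin k → V}
    (hb : b ∈ flat {i} a) : layerDir hP φ j b = layerDir hP φ j a := by
  set C := φ '' flat {i, j} a with hC
  have hbox : univ.pi (fun l => eval l '' C) = C := univ_pi_eval_image_image_flat hP.1 φ _ a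
  have hfull : ∀ {l : Fin k} {c : Fin k → V}, c ∈ flat {i, j} a → l ∈ ({i, j} : Set (Fin k)) →
      (eval (layerDir hP φ l c) '' C).ncard = Nat.card V := fun {l c} hc hl => by
    refine (eq_univ_iff_ncard _).mp
      (eq_univ_of_flat_singleton_subset_univ_pi (S := fun l => eval l '' C) (p := φ c) ?_)
    rw [← image_flat_singleton, hbox, hC, ← flat_eq_of_mem hc]
    exact image_mono (flat_mono (singleton_subset_iff.mpr hl) c)
  have hb' : b ∈ flat {i, j} a := flat_mono (by simp) a hb
  have ha : a ∈ flat {i, j} a := fun _ _ => rfl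
  by_contra hne
  have hdistinct₁ := (layerDir_injective hP φ a).ne hij
  have hdistinct₂ : layerDir hP φ i a ≠ layerDir hP φ j b :=
    layerDir_of_mem_flat_singleton hP φ hb ▸ (layerDir_injective hP φ b).ne hij
  have hcube := pow_card_le_prod (f := fun l => (eval l '' C).ncard)
    (A := {layerDir hP φ i a, layerDir hP φ j a, layerDir hP φ j b})
    (fun l => (ncard_pos).mpr ⟨φ a l, mem_image_of_mem _ ⟨a, ha, rfl⟩⟩) (by
      simp only [Finset.mem_insert, Finset.mem_singleton]
      rintro l (rfl | rfl | rfl)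
      exacts [hfull ha (by simp), hfull ha (by simp), hfull hb' (by simp)])
  rw [Finset.card_eq_three.mpr ⟨_, _, _, hdistinct₁, hdistinct₂, Ne.symm hne, rfl⟩,
    ← ncard_univ_pi, hbox, ncard_image_flat, ncard_pair hij,
    Nat.pow_le_pow_iff_right hP.two_le_card] at hcube
  omega

lemma layerDir_update (j i : Fin k) (a : Fin k → V) (v : V) :
    layerDir hP φ j (update a i v) = layerDir hP φ j a := by
  rcases eq_or_ne i j with rfl | hij
  · exact layerDir_of_mem_flat_singleton hP φ (update_mem_flat_singleton i a v)
  · exact layerDir_of_mem_flat_singleton_of_ne hP φ hij (update_mem_flat_singleton i a v)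

lemma layerDir_eq (j : Fin k) (a b : Fin k → V) : layerDir hP φ j a = layerDir hP φ j b :=
  apply_eq_of_forall_update_eq (T := ∅) (fun x i v _ => layerDir_update hP φ j i x v) (by simp)

noncomputable def coordPerm : Equiv.Perm (Fin k) :=
  Equiv.ofBijective (fun j => layerDir hP φ j fun _ => hP.1.nonempty.some)
    (Finite.injective_iff_bijective.mp (layerDir_injective hP φ _))

lemma coordPerm_apply (j : Fin k) (a : Fin k → V) : coordPerm hP φ j = layerDir hP φ j a :=
  layerDir_eq hP φ j _ a

lemma apply_update_apply_of_ne {j m : Fin k} (hm : m ≠ coordPerm hP φ j) (x : Fin k → V)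
    (v : V) : φ (update x j v) m = φ x m := by
  have hmem : φ (update x j v) ∈ φ '' flat {j} x :=
    mem_image_of_mem _ (update_mem_flat_singleton j x v)
  rw [image_flat_singleton hP, ← coordPerm_apply hP] at hmem
  exact hmem m hm

noncomputable def coordMap (j : Fin k) (v : V) : V :=
  φ (fun _ => v) (coordPerm hP φ j)

lemma apply_coordPerm (x : Fin k → V) (j : Fin k) :
    φ x (coordPerm hP φ j) = coordMap hP φ j (x j) :=
  apply_eq_of_forall_update_eq (T := {j}) (f := fun y => φ y (coordPerm hP φ j))
    (fun y i v hi => apply_update_apply_of_ne hP φ ((coordPerm hP φ).injective.ne hi).symm y v)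
    (by simp)

lemma apply_update (x : Fin k → V) (j : Fin k) (v : V) :
    φ (update x j v) = update (φ x) (coordPerm hP φ j) (coordMap hP φ j v) := by
  funext m
  rcases eq_or_ne m (coordPerm hP φ j) with rfl | hm
  · simp [apply_coordPerm]
  · rw [update_of_ne hm, apply_update_apply_of_ne hP φ hm]

lemma coordMap_injective (j : Fin k) : Injective (coordMap hP φ j) := fun v w h =>
  update_injective (fun _ => v) j
    (φ.injective (by rw [apply_update, apply_update, h]))

lemma coordMap_adj_iff (j : Fin k) {v w : V} :
    P.Adj (coordMap hP φ j v) (coordMap hP φ j w) ↔ P.Adj v w := by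
  rw [← boxProdFamily_adj_update_iff (P := fun _ => P) (x := φ fun _ => v), ← apply_update,
    ← apply_update]
  exact φ.map_adj_iff.trans boxProdFamily_adj_update_iff

noncomputable def coordAut (j : Fin k) : P ≃g P where
  toEquiv := Equiv.ofBijective (coordMap hP φ j)
    (Finite.injective_iff_bijective.mp (coordMap_injective hP φ j))
  map_rel_iff' := coordMap_adj_iff hP φ j

lemma apply_eq_coordAut (x : Fin k → V) (m : Fin k) :
    φ x m = coordAut hP φ ((coordPerm hP φ).symm m) (x ((coordPerm hP φ).symm m)) := by
  conv_lhs => rw [← (coordPerm hP φ).apply_symm_apply m]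
  exact apply_coordPerm hP φ x _

end boxProdPow

section Wreath

variable {V : Type} (P : SimpleGraph V) (k : ℕ)

def wreathAut (g : Fin k → (P ≃g P)) (σ : Equiv.Perm (Fin k)) :
    boxProdPow P k ≃g boxProdPow P k where
  toFun x m := g m (x (σ.symm m))
  invFun y j := (g (σ j)).symm (y (σ j))
  left_inv x := funext fun j => by simp
  right_inv y := funext fun m => by simp
  map_rel_iff' {x y} := by
    simp only [Equiv.coe_fn_mk, boxProdPow, boxProdFamily_adj, (g _).map_adj_iff,
      (g _).injective.eq_iff]
    exact σ.symm.exists_congr fun j => and_congr_right' <|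
      σ.symm.forall_congr fun i => by rw [σ.symm.injective.ne_iff]

def wreathHom :
    SemidirectProduct (Fin k → (P ≃g P)) (Equiv.Perm (Fin k)) (permCoordAction k (P ≃g P)) →*
      (boxProdPow P k ≃g boxProdPow P k) where
  toFun p := wreathAut P k p.left p.right
  map_one' := RelIso.ext fun _ => rfl
  map_mul' _ _ := RelIso.ext fun _ => rfl

variable {P k}

lemma wreathHom_injective [Nontrivial V] : Injective (wreathHom P k) := by
  rw [injective_iff_map_eq_one]
  intro p hp
  have hfix : ∀ (x : Fin k → V) m, p.left m (x (p.right.symm m)) = x m := fun x m =>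
    congrFun (congrArg (fun ψ : boxProdPow P k ≃g boxProdPow P k => ψ x) hp) m
  have hleft : p.left = 1 := funext fun m => RelIso.ext fun v => hfix (fun _ => v) m
  have hright : p.right = 1 := by
    rw [← inv_eq_one]
    refine Equiv.ext fun m => eq_of_forall_apply_eq (V := V) fun x => ?_
    simpa [hleft] using hfix x m
  exact SemidirectProduct.ext hleft hright

lemma wreathHom_surjective [Fintype V] (hP : P.IsPrime) : Surjective (wreathHom P k) :=
  fun φ => ⟨⟨fun m => boxProdPow.coordAut hP φ ((boxProdPow.coordPerm hP φ).symm m),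
    boxProdPow.coordPerm hP φ⟩, RelIso.ext fun x => funext fun m =>
      (boxProdPow.apply_eq_coordAut hP φ x m).symm⟩

end Wreath

theorem aut_boxProdPow_eq_wreath_general {V : Type} [Fintype V] (P : SimpleGraph V)
    (hP : P.IsPrime) (k : ℕ) :
    Nonempty ((boxProdPow P k ≃g boxProdPow P k) ≃*
      SemidirectProduct (Fin k → (P ≃g P)) (Equiv.Perm (Fin k))
        (permCoordAction k (P ≃g P))) :=
  have := hP.nontrivial
  ⟨(MulEquiv.ofBijective (wreathHom P k) ⟨wreathHom_injective, wreathHom_surjective hP⟩).symm⟩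

/-- (Sabidussi) For a prime graph `P` and `k ≥ 1`, the automorphism group of the
`k`-fold box product `P^{□k}` is isomorphic to the wreath product
`Aut(P) ≀ S_k = (Fin k → Aut(P)) ⋊ Perm (Fin k)`, where `Perm (Fin k)` acts by
permuting the coordinates. -/
theorem aut_boxProdPow_eq_wreath {V : Type} [Fintype V] (P : SimpleGraph V)
    (hP : P.IsPrime) (k : ℕ) (hk : 0 < k) :
    Nonempty ((boxProdPow P k ≃g boxProdPow P k) ≃*
      SemidirectProduct (Fin k → (P ≃g P)) (Equiv.Perm (Fin k))
        (permCoordAction k (P ≃g P))) :=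
  aut_boxProdPow_eq_wreath_general P hP k
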